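/- (Unique invariant parallel spinor for example (2).) Fix t > 0 and let A₁,…,A₇ be the connection matrices of example (2). Then the space {ψ ∈ ℝ⁸ : σ(A_i)·ψ = 0 for all i = 1,…,7} is exactly the one-dimensional line spanned by Ψ = (0,0,0,0,1,1,−1,1). -/

import Mathlib

/-!
The spin lift is linear and sends `E_{pq}` to `½ e_p e_q`, and each `e_p` acts on `ℝ⁸` by a signed
permutation of coordinates, so every `σ(A_i)` acts by an explicit matrix. All of them annihilate `Ψ`:
the `A_i` take values in `𝔤₂`, the stabiliser of `Ψ`. Conversely, for `t ≠ 0` the two equations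
`σ(A₅)ψ = 0` and `σ(A₆)ψ = 0` already force `ψ₁ = ⋯ = ψ₄ = 0` and `ψ₅ = ψ₆ = -ψ₇ = ψ₈`.
-/

open Matrix

noncomputable section

/-- `E8 i j` is the 8×8 skew-symmetric matrix sending the `i`-th basis
vector to the `j`-th, the `j`-th to minus the `i`-th, and all others to 0. -/
def E8 (i j : Fin 8) : Matrix (Fin 8) (Fin 8) ℝ :=
  Matrix.single j i 1 - Matrix.single i j 1

/-- The matrices `e₁,…,e₇` of the 7-dimensional spin representation on ℝ⁸
(indices shifted to be 0-based). -/
def g : Fin 7 → Matrix (Fin 8) (Fin 8) ℝ :=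
  ![E8 0 7 + E8 1 6 - E8 2 5 - E8 3 4,
    -E8 0 6 + E8 1 7 + E8 2 4 - E8 3 5,
    -E8 0 5 + E8 1 4 - E8 2 7 + E8 3 6,
    -E8 0 4 - E8 1 5 - E8 2 6 - E8 3 7,
    -E8 0 2 - E8 1 3 + E8 4 6 + E8 5 7,
    E8 0 3 - E8 1 2 - E8 4 7 + E8 5 6,
    E8 0 1 - E8 2 3 - E8 4 5 + E8 6 7]

/-- 7×7 version of `E_{ij}`. -/
def E7 (i j : Fin 7) : Matrix (Fin 7) (Fin 7) ℝ :=
  Matrix.single j i 1 - Matrix.single i j 1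

/-- The spin lift `σ(A) = (1/2) Σ_{p<q} a_{pq} e_p e_q` of a skew-symmetric
7×7 matrix `A = Σ_{p<q} a_{pq} E_{pq}` (so that `a_{pq} = A q p` for `p < q`). -/
def spinLift (A : Matrix (Fin 7) (Fin 7) ℝ) : Matrix (Fin 8) (Fin 8) ℝ :=
  (1/2 : ℝ) • ∑ p : Fin 7, ∑ q : Fin 7, if p < q then A q p • (g p * g q) else 0

/-- Clifford action of the interior product `e_i ⌟ e_{abc}` (for `a<b<c`). -/
def contr (i a b c : Fin 7) : Matrix (Fin 8) (Fin 8) ℝ :=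
  (if i = a then g b * g c else 0) - (if i = b then g a * g c else 0) +
    (if i = c then g a * g b else 0)

/-- The ordered index triples (0-based) of the eleven basis 3-forms spanning `Λ³₁₁`:
`e₁₂₅, e₁₃₆, e₂₄₆, e₃₄₅, e₁₂₆, e₃₄₆, e₁₃₅, e₂₄₅, e₁₄₇, e₅₆₇, e₂₃₇`. -/
def tri : Fin 11 → Fin 7 × Fin 7 × Fin 7 :=
  ![(0,1,4),(0,2,5),(1,3,5),(2,3,4),(0,1,5),(2,3,5),(0,2,4),(1,3,4),(0,3,6),(4,5,6),(1,2,6)]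

/-- For `T = Σ_k c_k e_{tri k} ∈ Λ³₁₁`, the Clifford action `Cl(e_i ⌟ T)`. -/
def clContr (c : Fin 11 → ℝ) (i : Fin 7) : Matrix (Fin 8) (Fin 8) ℝ :=
  ∑ k : Fin 11, c k • contr i (tri k).1 (tri k).2.1 (tri k).2.2

/-- `ψ` is `∇ᵀ`-parallel for connection matrices `A` and torsion `T ∈ Λ³₁₁`
with coefficient vector `c`. -/
def IsParallel (A : Fin 7 → Matrix (Fin 7) (Fin 7) ℝ) (c : Fin 11 → ℝ)
    (ψ : Fin 8 → ℝ) : Prop :=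
  ∀ i : Fin 7, (spinLift (A i)).mulVec ψ + (clContr c i).mulVec ψ = 0

/-- Connection matrices of example (2). -/
def Aex2 (t : ℝ) : Fin 7 → Matrix (Fin 7) (Fin 7) ℝ :=
  ![(-t) • ((2:ℝ) • E7 0 6 + E7 2 4 - E7 1 5),
    (-t) • (E7 0 5 + (2:ℝ) • E7 1 6 + E7 3 4),
    (-t) • (E7 0 4 - E7 2 6),
    (-t) • (E7 1 4 - E7 3 6),
    (-t) • (E7 0 2 + E7 1 3 + (2:ℝ) • E7 4 6),
    (-t) • (E7 0 1 - E7 5 6),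
    0]

/-- Coefficient vector of `η⁺ = e₁₂₅+e₁₃₆+e₂₄₆−e₃₄₅`. -/
def etaP : Fin 11 → ℝ := ![1,1,1,-1,0,0,0,0,0,0,0]

/-- Coefficient vector of `η⁻ = e₁₂₆−e₁₃₅−e₂₄₅−e₃₄₆`. -/
def etaM : Fin 11 → ℝ := ![0,0,0,0,1,-1,-1,-1,0,0,0]

/-- Coefficient vector of the `k`-th basis 3-form of `Λ³₁₁`. -/
def bv (k : Fin 11) : Fin 11 → ℝ := Pi.single k 1

lemma E8_mulVec (i j : Fin 8) (ψ : Fin 8 → ℝ) :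
    E8 i j *ᵥ ψ = Pi.single j (ψ i) - Pi.single i (ψ j) := by
  ext k; simp [E8, sub_mulVec, single_mulVec_eq, Pi.single_apply]

lemma spinLift_zero : spinLift 0 = 0 := by
  simp [spinLift]

lemma spinLift_add (A B : Matrix (Fin 7) (Fin 7) ℝ) :
    spinLift (A + B) = spinLift A + spinLift B := by
  simp only [spinLift, ← smul_add, ← Finset.sum_add_distrib, Matrix.add_apply, add_smul,
    ite_add_zero]

lemma spinLift_smul (c : ℝ) (A : Matrix (Fin 7) (Fin 7) ℝ) :
    spinLift (c • A) = c • spinLift A := by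
  simp only [spinLift, Finset.smul_sum, smul_ite, smul_zero, Matrix.smul_apply, smul_eq_mul,
    mul_smul, smul_comm c (1/2 : ℝ)]

lemma spinLift_sub (A B : Matrix (Fin 7) (Fin 7) ℝ) :
    spinLift (A - B) = spinLift A - spinLift B := by
  rw [sub_eq_add_neg, ← neg_one_smul ℝ B, spinLift_add, spinLift_smul, neg_one_smul, sub_eq_add_neg]

lemma spinLift_E7 {p q : Fin 7} (hpq : p < q) :
    spinLift (E7 p q) = (1/2 : ℝ) • (g p * g q) := by
  have summand (a b : Fin 7) :
      (if a < b then (E7 p q b a) • (g a * g b) else 0) =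
        if a = p then if b = q then g p * g q else 0 else 0 := by
    simp only [E7, Matrix.sub_apply, Matrix.single_apply]
    split_ifs <;> subst_vars <;> first | omega | simp
  simp [spinLift, summand]

lemma g_zero_mulVec (ψ : Fin 8 → ℝ) :
    g 0 *ᵥ ψ = ![-ψ 7, -ψ 6, ψ 5, ψ 4, -ψ 3, -ψ 2, ψ 1, ψ 0] := by
  ext j; fin_cases j <;> simp [g, E8_mulVec, add_mulVec, sub_mulVec]

lemma g_one_mulVec (ψ : Fin 8 → ℝ) :
    g 1 *ᵥ ψ = ![ψ 6, -ψ 7, -ψ 4, ψ 5, ψ 2, -ψ 3, -ψ 0, ψ 1] := by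
  ext j; fin_cases j <;> simp [g, E8_mulVec, add_mulVec, sub_mulVec, neg_mulVec]

lemma g_two_mulVec (ψ : Fin 8 → ℝ) :
    g 2 *ᵥ ψ = ![ψ 5, -ψ 4, ψ 7, -ψ 6, ψ 1, -ψ 0, ψ 3, -ψ 2] := by
  ext j; fin_cases j <;> simp [g, E8_mulVec, add_mulVec, sub_mulVec, neg_mulVec]

lemma g_three_mulVec (ψ : Fin 8 → ℝ) :
    g 3 *ᵥ ψ = ![ψ 4, ψ 5, ψ 6, ψ 7, -ψ 0, -ψ 1, -ψ 2, -ψ 3] := by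
  ext j; fin_cases j <;> simp [g, E8_mulVec, sub_mulVec, neg_mulVec]

lemma g_four_mulVec (ψ : Fin 8 → ℝ) :
    g 4 *ᵥ ψ = ![ψ 2, ψ 3, -ψ 0, -ψ 1, -ψ 6, -ψ 7, ψ 4, ψ 5] := by
  ext j; fin_cases j <;> simp [g, E8_mulVec, add_mulVec, sub_mulVec, neg_mulVec]

lemma g_five_mulVec (ψ : Fin 8 → ℝ) :
    g 5 *ᵥ ψ = ![-ψ 3, ψ 2, -ψ 1, ψ 0, ψ 7, -ψ 6, ψ 5, -ψ 4] := by
  ext j; fin_cases j <;> simp [g, E8_mulVec, add_mulVec, sub_mulVec]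

lemma g_six_mulVec (ψ : Fin 8 → ℝ) :
    g 6 *ᵥ ψ = ![-ψ 1, ψ 0, ψ 3, -ψ 2, ψ 5, -ψ 4, -ψ 7, ψ 6] := by
  ext j; fin_cases j <;> simp [g, E8_mulVec, add_mulVec, sub_mulVec]

def Ψ : Fin 8 → ℝ := ![0, 0, 0, 0, 1, 1, -1, 1]

lemma spinLift_Aex2_mulVec_Ψ (t : ℝ) (i : Fin 7) : spinLift (Aex2 t i) *ᵥ Ψ = 0 := by
  fin_cases i <;>
    simp only [Aex2, Fin.reduceFinMk, Fin.zero_eta, Fin.mk_one, Fin.reduceLT, Fin.isValue,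
      Matrix.cons_val, spinLift_add, spinLift_sub, spinLift_smul, spinLift_zero, spinLift_E7,
      zero_mulVec, add_mulVec, sub_mulVec, smul_mulVec, ← mulVec_mulVec, g_zero_mulVec,
      g_one_mulVec, g_two_mulVec, g_three_mulVec, g_four_mulVec, g_five_mulVec, g_six_mulVec]
  all_goals ext j; fin_cases j <;> simp [Ψ] <;> norm_num

lemma spinLift_Aex2_four_mulVec (t : ℝ) (ψ : Fin 8 → ℝ) :
    spinLift (Aex2 t 4) *ᵥ ψ =
      t • ![-ψ 3, ψ 2, -ψ 1, ψ 0, -(ψ 6 + ψ 7), ψ 6 + ψ 7, ψ 4 - ψ 5, ψ 4 - ψ 5] := by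
  simp only [Aex2, Fin.isValue, Matrix.cons_val, Fin.reduceLT, spinLift_add, spinLift_smul,
    spinLift_E7, add_mulVec, smul_mulVec, ← mulVec_mulVec, g_zero_mulVec, g_one_mulVec,
    g_two_mulVec, g_three_mulVec, g_four_mulVec, g_six_mulVec]
  ext j; fin_cases j <;> simp <;> ring

lemma spinLift_Aex2_five_mulVec (t : ℝ) (ψ : Fin 8 → ℝ) :
    spinLift (Aex2 t 5) *ᵥ ψ = (t / 2) •
      ![ψ 1 + ψ 2, ψ 3 - ψ 0, ψ 3 - ψ 0, -(ψ 1 + ψ 2), ψ 5 + ψ 6, ψ 7 - ψ 4, ψ 7 - ψ 4, -(ψ 5 + ψ 6)] := by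
  simp only [Aex2, Fin.isValue, Matrix.cons_val, Fin.reduceLT, spinLift_sub, spinLift_smul,
    spinLift_E7, sub_mulVec, smul_mulVec, ← mulVec_mulVec, g_zero_mulVec, g_one_mulVec,
    g_five_mulVec, g_six_mulVec]
  ext j; fin_cases j <;> simp <;> ring

lemma smul_Ψ_eq_of_mulVec_eq_zero {t : ℝ} (ht : t ≠ 0) {ψ : Fin 8 → ℝ}
    (h4 : spinLift (Aex2 t 4) *ᵥ ψ = 0) (h5 : spinLift (Aex2 t 5) *ᵥ ψ = 0) : ψ 4 • Ψ = ψ := by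
  rw [spinLift_Aex2_four_mulVec, smul_eq_zero, or_iff_right ht] at h4
  rw [spinLift_Aex2_five_mulVec, smul_eq_zero, or_iff_right (div_ne_zero ht two_ne_zero)] at h5
  simp only [Matrix.cons_eq_zero_iff, Matrix.zero_empty, and_true] at h4 h5
  ext j; fin_cases j <;> simp [Ψ] <;> linarith

/-- unique invariant parallel spinor for example (2). -/
theorem stmt16 (t : ℝ) (ht : 0 < t) :
    ∀ ψ : Fin 8 → ℝ, (∀ i : Fin 7, (spinLift (Aex2 t i)).mulVec ψ = 0) ↔
      ψ ∈ Submodule.span ℝ {(![0, 0, 0, 0, 1, 1, -1, 1] : Fin 8 → ℝ)} := by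
  intro ψ
  rw [Submodule.mem_span_singleton]
  constructor
  · intro h
    exact ⟨ψ 4, smul_Ψ_eq_of_mulVec_eq_zero ht.ne' (h 4) (h 5)⟩
  · rintro ⟨a, rfl⟩ i
    show spinLift (Aex2 t i) *ᵥ (a • Ψ) = 0
    rw [mulVec_smul, spinLift_Aex2_mulVec_Ψ, smul_zero]
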